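/- arXiv:1209.6116 — 2 statements merged into one kernel-verified Lean document; each statement's English description precedes it below -/
import Mathlib

section
/- Let x^0 > 0, define the classic EM iteration x^{k+1} = P(x^k), and let x* denote the limit of the sequence {x^k}. Then for every k the iteration is Fejér-monotone in Kullback–Leibler distance with respect to x*: I(x*, x^{k+1}) ≤ I(x*, x^k), and equality holds if and only if x^k is a fixed point of the EM operator P. -/
open Finset Filter Topology

noncomputable def dd {M N : ℕ} (A : Fin M → Fin N → ℝ) (x : Fin N → ℝ) (i : Fin M) : ℝ :=
  ∑ j, A i j * x j

noncomputable def ff {M N : ℕ} (A : Fin M → Fin N → ℝ) (b : Fin M → ℝ) (x : Fin N → ℝ) (j : Fin N) : ℝ :=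
  ∑ i, A i j * b i / dd A x i

noncomputable def EMop {M N : ℕ} (A : Fin M → Fin N → ℝ) (b : Fin M → ℝ) (x : Fin N → ℝ) : Fin N → ℝ :=
  fun j => x j * ff A b x j

noncomputable def KL {N : ℕ} (u v : Fin N → ℝ) : ℝ :=
  (∑ j, u j * Real.log (u j / v j)) - ∑ j, (u j - v j)

noncomputable def IAb {M N : ℕ} (A : Fin M → Fin N → ℝ) (b : Fin M → ℝ) (x : Fin N → ℝ) : ℝ :=
  (∑ i, b i * Real.log (b i / dd A x i)) - ∑ i, (b i - dd A x i)

noncomputable def finSup0 {ι : Type*} (s : Finset ι) (g : ι → ℝ) : ℝ :=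
  if h : s.Nonempty then s.sup' h g else 0

noncomputable def finInf0 {ι : Type*} (s : Finset ι) (g : ι → ℝ) : ℝ :=
  if h : s.Nonempty then s.inf' h g else 0

lemma jensen_log {ι : Type*} (s : Finset ι) (w y : ι → ℝ)
    (hw : ∀ i ∈ s, 0 ≤ w i) (hy : ∀ i ∈ s, 0 < y i)
    (hw1 : ∑ i ∈ s, w i = 1) :
    ∑ i ∈ s, w i * Real.log (y i) ≤ Real.log (∑ i ∈ s, w i * y i) := by
  set S := ∑ i ∈ s, w i * y i with hS
  have hS0 : 0 < S := by
    obtain ⟨i0, hi0, hwi0⟩ : ∃ i ∈ s, 0 < w i := by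
      by_contra h; push_neg at h
      have : ∑ i ∈ s, w i ≤ 0 := Finset.sum_nonpos (fun i hi => h i hi)
      linarith
    exact Finset.sum_pos' (fun i hi => mul_nonneg (hw i hi) (hy i hi).le)
      ⟨i0, hi0, mul_pos hwi0 (hy i0 hi0)⟩
  have key : ∑ i ∈ s, (w i * Real.log (y i) - w i * Real.log S)
      ≤ ∑ i ∈ s, (w i * (y i / S) - w i) := by
    refine Finset.sum_le_sum (fun i hi => ?_)
    have h1 : Real.log (y i / S) ≤ y i / S - 1 :=
      Real.log_le_sub_one_of_pos (div_pos (hy i hi) hS0)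
    have h2 : Real.log (y i / S) = Real.log (y i) - Real.log S :=
      Real.log_div (hy i hi).ne' hS0.ne'
    have h3 := mul_le_mul_of_nonneg_left h1 (hw i hi)
    rw [h2] at h3
    nlinarith
  have e1 : ∑ i ∈ s, (w i * Real.log (y i) - w i * Real.log S)
      = (∑ i ∈ s, w i * Real.log (y i)) - Real.log S := by
    rw [Finset.sum_sub_distrib, ← Finset.sum_mul, hw1, one_mul]
  have e2 : ∑ i ∈ s, (w i * (y i / S) - w i) = 0 := by
    rw [Finset.sum_sub_distrib, hw1]
    have : ∑ i ∈ s, w i * (y i / S) = (∑ i ∈ s, w i * y i) / S := by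
      rw [Finset.sum_div]; exact Finset.sum_congr rfl (fun i _ => by ring)
    rw [this, ← hS, div_self hS0.ne']; ring
  rw [e1, e2] at key; linarith

lemma phi_nonneg {t : ℝ} (ht : 0 < t) : 0 ≤ t * Real.log t - t + 1 := by
  have h := Real.log_le_sub_one_of_pos (inv_pos.mpr ht)
  rw [Real.log_inv] at h
  have := mul_le_mul_of_nonneg_left h ht.le
  have h2 : t * t⁻¹ = 1 := mul_inv_cancel₀ ht.ne'
  nlinarith

lemma phi_eq_zero {t : ℝ} (ht : 0 < t) (h : t * Real.log t - t + 1 = 0) : t = 1 := by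
  by_contra hne
  have h1 : t⁻¹ ≠ 1 := fun h' => hne (inv_eq_one.mp h')
  have h2 := Real.log_lt_sub_one_of_pos (inv_pos.mpr ht) h1
  rw [Real.log_inv] at h2
  have := mul_lt_mul_of_pos_left h2 ht
  have h3 : t * t⁻¹ = 1 := mul_inv_cancel₀ ht.ne'
  nlinarith

lemma dd_nonneg {M N : ℕ} {A : Fin M → Fin N → ℝ} {x : Fin N → ℝ}
    (hA : ∀ i j, 0 ≤ A i j) (hx : ∀ j, 0 ≤ x j) (i : Fin M) : 0 ≤ dd A x i :=
  Finset.sum_nonneg fun j _ => mul_nonneg (hA i j) (hx j)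

lemma dd_pos {M N : ℕ} {A : Fin M → Fin N → ℝ} {x : Fin N → ℝ}
    (hA : ∀ i j, 0 ≤ A i j) (hx : ∀ j, 0 < x j) {i : Fin M}
    (hrowi : ∃ j, 0 < A i j) : 0 < dd A x i := by
  obtain ⟨j0, hj0⟩ := hrowi
  exact Finset.sum_pos' (fun j _ => mul_nonneg (hA i j) (hx j).le)
    ⟨j0, Finset.mem_univ _, mul_pos hj0 (hx j0)⟩

lemma col_pos {M N : ℕ} {A : Fin M → Fin N → ℝ}
    (hA : ∀ i j, 0 ≤ A i j) (hcol : ∀ j, ∑ i, A i j = 1) (j : Fin N) :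
    ∃ i, 0 < A i j := by
  by_contra h; push_neg at h
  have : ∑ i, A i j ≤ 0 := Finset.sum_nonpos fun i _ => h i
  rw [hcol j] at this; linarith

lemma ff_pos {M N : ℕ} {A : Fin M → Fin N → ℝ} {b : Fin M → ℝ} {x : Fin N → ℝ}
    (hA : ∀ i j, 0 ≤ A i j) (hcol : ∀ j, ∑ i, A i j = 1)
    (hrow : ∀ i, ∃ j, 0 < A i j) (hb : ∀ i, 0 < b i) (hx : ∀ j, 0 < x j) (j : Fin N) :
    0 < ff A b x j := by
  obtain ⟨i0, hi0⟩ := col_pos hA hcol j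
  refine Finset.sum_pos' (fun i _ => div_nonneg (mul_nonneg (hA i j) (hb i).le)
    (dd_nonneg hA (fun j => (hx j).le) i)) ⟨i0, Finset.mem_univ _, ?_⟩
  exact div_pos (mul_pos hi0 (hb i0)) (dd_pos hA hx (hrow i0))

lemma sum_dd {M N : ℕ} {A : Fin M → Fin N → ℝ} {x : Fin N → ℝ}
    (hcol : ∀ j, ∑ i, A i j = 1) : ∑ i, dd A x i = ∑ j, x j := by
  unfold dd
  rw [Finset.sum_comm]
  exact Finset.sum_congr rfl fun j _ => by rw [← Finset.sum_mul, hcol j, one_mul]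

lemma sum_EMop {M N : ℕ} {A : Fin M → Fin N → ℝ} {b : Fin M → ℝ} {x : Fin N → ℝ}
    (hA : ∀ i j, 0 ≤ A i j) (hrow : ∀ i, ∃ j, 0 < A i j)
    (hx : ∀ j, 0 < x j) : ∑ j, EMop A b x j = ∑ i, b i := by
  unfold EMop ff
  have e1 : ∀ j : Fin N, x j * (∑ i, A i j * b i / dd A x i)
      = ∑ i, (A i j * x j) * (b i / dd A x i) := fun j => by
    rw [Finset.mul_sum]; exact Finset.sum_congr rfl fun i _ => by ring
  simp_rw [e1]
  rw [Finset.sum_comm]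
  refine Finset.sum_congr rfl fun i _ => ?_
  rw [← Finset.sum_mul]
  have hd : dd A x i ≠ 0 := (dd_pos hA hx (hrow i)).ne'
  show dd A x i * (b i / dd A x i) = b i
  field_simp

lemma IAb_step {M N : ℕ} {A : Fin M → Fin N → ℝ} {b : Fin M → ℝ} {x : Fin N → ℝ}
    (hA : ∀ i j, 0 ≤ A i j) (hcol : ∀ j, ∑ i, A i j = 1)
    (hrow : ∀ i, ∃ j, 0 < A i j) (hb : ∀ i, 0 < b i) (hx : ∀ j, 0 < x j) :
    IAb A b (EMop A b x)
      + ∑ j, x j * (ff A b x j * Real.log (ff A b x j) - ff A b x j + 1)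
      ≤ IAb A b x := by
  set v := EMop A b x with hv
  have hvpos : ∀ j, 0 < v j := fun j => mul_pos (hx j) (ff_pos hA hcol hrow hb hx j)
  have hdx : ∀ i, 0 < dd A x i := fun i => dd_pos hA hx (hrow i)
  have hdv : ∀ i, 0 < dd A v i := fun i => dd_pos hA hvpos (hrow i)
  have hsumv : ∑ j, v j = ∑ i, b i := sum_EMop hA hrow hx
  have hsumdv : ∑ i, dd A v i = ∑ i, b i := by rw [sum_dd hcol, hsumv]
  have hsumdx : ∑ i, dd A x i = ∑ j, x j := sum_dd hcol
  have hjen : ∀ i, ∑ j, (A i j * x j / dd A x i) * Real.log (ff A b x j)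
      ≤ Real.log (dd A v i / dd A x i) := by
    intro i
    have hw1 : ∑ j, A i j * x j / dd A x i = 1 := by
      rw [← Finset.sum_div]
      exact div_self (hdx i).ne'
    have h1 := jensen_log Finset.univ (fun j => A i j * x j / dd A x i)
      (fun j => ff A b x j)
      (fun j _ => div_nonneg (mul_nonneg (hA i j) (hx j).le) (hdx i).le)
      (fun j _ => ff_pos hA hcol hrow hb hx j) hw1
    have e : ∑ j, (A i j * x j / dd A x i) * ff A b x j = dd A v i / dd A x i := by
      rw [eq_div_iff (hdx i).ne', Finset.sum_mul]
      refine Finset.sum_congr rfl fun j _ => ?_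
      show A i j * x j / dd A x i * ff A b x j * dd A x i = A i j * v j
      rw [hv]
      calc A i j * x j / dd A x i * ff A b x j * dd A x i
          = A i j * x j * ff A b x j * (dd A x i / dd A x i) := by ring
        _ = A i j * (x j * ff A b x j) := by rw [div_self (hdx i).ne']; ring
    rw [e] at h1
    exact h1
  have hkey : ∑ j, x j * (ff A b x j * Real.log (ff A b x j))
      ≤ ∑ i, b i * Real.log (dd A v i / dd A x i) := by
    have h2 : ∑ i, b i * (∑ j, (A i j * x j / dd A x i) * Real.log (ff A b x j))
        ≤ ∑ i, b i * Real.log (dd A v i / dd A x i) :=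
      Finset.sum_le_sum fun i _ => mul_le_mul_of_nonneg_left (hjen i) (hb i).le
    refine le_trans (le_of_eq ?_) h2
    have e : ∀ i, b i * (∑ j, (A i j * x j / dd A x i) * Real.log (ff A b x j))
        = ∑ j, (A i j * b i / dd A x i) * (x j * Real.log (ff A b x j)) := by
      intro i
      rw [Finset.mul_sum]
      exact Finset.sum_congr rfl fun j _ => by ring
    simp_rw [e]
    rw [Finset.sum_comm]
    refine Finset.sum_congr rfl fun j _ => ?_
    rw [← Finset.sum_mul]
    show x j * (ff A b x j * Real.log (ff A b x j)) = ff A b x j * (x j * Real.log (ff A b x j))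
    ring
  have hlog : ∀ i, b i * Real.log (dd A v i / dd A x i)
      = b i * Real.log (b i / dd A x i) - b i * Real.log (b i / dd A v i) := by
    intro i
    rw [Real.log_div (hdv i).ne' (hdx i).ne', Real.log_div (hb i).ne' (hdx i).ne',
      Real.log_div (hb i).ne' (hdv i).ne']
    ring
  have expand : IAb A b x - IAb A b v
      = (∑ i, b i * Real.log (dd A v i / dd A x i)) + (∑ j, x j) - ∑ i, b i := by
    unfold IAb
    have e1 : ∑ i, b i * Real.log (dd A v i / dd A x i)
        = (∑ i, b i * Real.log (b i / dd A x i)) - ∑ i, b i * Real.log (b i / dd A v i) := by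
      rw [← Finset.sum_sub_distrib]
      exact Finset.sum_congr rfl fun i _ => hlog i
    have e2 : ∑ i, (b i - dd A x i) = (∑ i, b i) - ∑ j, x j := by
      rw [Finset.sum_sub_distrib, hsumdx]
    have e3 : ∑ i, (b i - dd A v i) = 0 := by
      rw [Finset.sum_sub_distrib, hsumdv]; ring
    rw [e1, e2, e3]; ring
  have expandPhi : ∑ j, x j * (ff A b x j * Real.log (ff A b x j) - ff A b x j + 1)
      = (∑ j, x j * (ff A b x j * Real.log (ff A b x j))) - (∑ i, b i) + ∑ j, x j := by
    have e : ∀ j : Fin N, x j * (ff A b x j * Real.log (ff A b x j) - ff A b x j + 1)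
        = x j * (ff A b x j * Real.log (ff A b x j)) - v j + x j := by
      intro j; rw [hv]; show _ = _ - x j * ff A b x j + x j; ring
    simp_rw [e]
    rw [Finset.sum_add_distrib, Finset.sum_sub_distrib, hsumv]
  linarith [hkey, expand, expandPhi]

lemma KL_drop {M N : ℕ} {A : Fin M → Fin N → ℝ} {b : Fin M → ℝ} {x z : Fin N → ℝ}
    (hA : ∀ i j, 0 ≤ A i j) (hcol : ∀ j, ∑ i, A i j = 1)
    (hrow : ∀ i, ∃ j, 0 < A i j) (hb : ∀ i, 0 < b i) (hx : ∀ j, 0 < x j)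
    (hz : ∀ j, 0 ≤ z j) (hdz : ∀ i, 0 < dd A z i)
    (hfixz : ∀ j, 0 < z j → ff A b z j = 1)
    (hsumz : ∑ j, z j = ∑ i, b i) :
    IAb A b x - IAb A b z ≤ KL z x - KL z (EMop A b x) := by
  set v := EMop A b x with hv
  have hdx : ∀ i, 0 < dd A x i := fun i => dd_pos hA hx (hrow i)
  have hff : ∀ j, 0 < ff A b x j := ff_pos hA hcol hrow hb hx
  have hsumdz : ∑ i, dd A z i = ∑ i, b i := by rw [sum_dd hcol, hsumz]
  have hsumdx : ∑ i, dd A x i = ∑ j, x j := sum_dd hcol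
  have hsumv : ∑ j, v j = ∑ i, b i := sum_EMop hA hrow hx
  have stepA : KL z x - KL z v
      = (∑ j, z j * Real.log (ff A b x j)) + (∑ j, x j) - ∑ i, b i := by
    unfold KL
    have e1 : ∑ j, z j * Real.log (z j / x j) - ∑ j, z j * Real.log (z j / v j)
        = ∑ j, z j * Real.log (ff A b x j) := by
      rw [← Finset.sum_sub_distrib]
      refine Finset.sum_congr rfl fun j _ => ?_
      rcases eq_or_lt_of_le (hz j) with h0 | h0
      · rw [← h0]; simp
      · have hxj := hx j
        have hfj := hff j
        have hvj : v j = x j * ff A b x j := rfl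
        rw [hvj, Real.log_div h0.ne' hxj.ne',
          Real.log_div h0.ne' (mul_pos hxj hfj).ne', Real.log_mul hxj.ne' hfj.ne']
        ring
    simp only [Finset.sum_sub_distrib]
    linarith [e1, hsumz, hsumv]
  have stepB : ∑ i, b i * Real.log (dd A z i / dd A x i)
      ≤ ∑ j, z j * Real.log (ff A b x j) := by
    have hjen : ∀ j, 0 < z j →
        ∑ i, (A i j * b i / dd A z i) * Real.log (dd A z i / dd A x i)
          ≤ Real.log (ff A b x j) := by
      intro j hzj
      have hw1 : ∑ i, A i j * b i / dd A z i = 1 := hfixz j hzj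
      have h1 := jensen_log Finset.univ (fun i => A i j * b i / dd A z i)
        (fun i => dd A z i / dd A x i)
        (fun i _ => div_nonneg (mul_nonneg (hA i j) (hb i).le) (hdz i).le)
        (fun i _ => div_pos (hdz i) (hdx i)) hw1
      have e : ∑ i, (A i j * b i / dd A z i) * (dd A z i / dd A x i) = ff A b x j := by
        refine Finset.sum_congr rfl fun i _ => ?_
        calc A i j * b i / dd A z i * (dd A z i / dd A x i)
            = A i j * b i / dd A x i * (dd A z i / dd A z i) := by ring
          _ = A i j * b i / dd A x i := by rw [div_self (hdz i).ne', mul_one]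
      rw [e] at h1
      exact h1
    have h2 : ∑ j, z j * (∑ i, (A i j * b i / dd A z i) * Real.log (dd A z i / dd A x i))
        ≤ ∑ j, z j * Real.log (ff A b x j) := by
      refine Finset.sum_le_sum fun j _ => ?_
      rcases eq_or_lt_of_le (hz j) with h0 | h0
      · rw [← h0]; simp
      · exact mul_le_mul_of_nonneg_left (hjen j h0) (hz j)
    refine le_trans (le_of_eq ?_) h2
    have e : ∀ j : Fin N,
        z j * (∑ i, (A i j * b i / dd A z i) * Real.log (dd A z i / dd A x i))
        = ∑ i, (A i j * z j) * (b i / dd A z i * Real.log (dd A z i / dd A x i)) := by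
      intro j
      rw [Finset.mul_sum]
      exact Finset.sum_congr rfl fun i _ => by ring
    simp_rw [e]
    rw [Finset.sum_comm]
    refine Finset.sum_congr rfl fun i _ => ?_
    rw [← Finset.sum_mul]
    show b i * Real.log (dd A z i / dd A x i)
        = dd A z i * (b i / dd A z i * Real.log (dd A z i / dd A x i))
    calc b i * Real.log (dd A z i / dd A x i)
        = (dd A z i / dd A z i) * (b i * Real.log (dd A z i / dd A x i)) := by
          rw [div_self (hdz i).ne', one_mul]
      _ = dd A z i * (b i / dd A z i * Real.log (dd A z i / dd A x i)) := by ring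
  have stepC : IAb A b x - IAb A b z
      = (∑ i, b i * Real.log (dd A z i / dd A x i)) + (∑ j, x j) - ∑ i, b i := by
    unfold IAb
    have e1 : ∑ i, b i * Real.log (dd A z i / dd A x i)
        = (∑ i, b i * Real.log (b i / dd A x i)) - ∑ i, b i * Real.log (b i / dd A z i) := by
      rw [← Finset.sum_sub_distrib]
      refine Finset.sum_congr rfl fun i _ => ?_
      rw [Real.log_div (hdz i).ne' (hdx i).ne', Real.log_div (hb i).ne' (hdx i).ne',
        Real.log_div (hb i).ne' (hdz i).ne']
      ring
    have e2 : ∑ i, (b i - dd A x i) = (∑ i, b i) - ∑ j, x j := by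
      rw [Finset.sum_sub_distrib, hsumdx]
    have e3 : ∑ i, (b i - dd A z i) = 0 := by
      rw [Finset.sum_sub_distrib, hsumdz]; ring
    rw [e2, e3, e1]; ring
  linarith [stepA, stepB, stepC]

theorem stmt_4
    (M N : ℕ) (hM : 0 < M) (hN : 0 < N)
    (A : Fin M → Fin N → ℝ) (b : Fin M → ℝ)
    (hA : ∀ i j, 0 ≤ A i j)
    (hcol : ∀ j, ∑ i, A i j = 1)
    (hrow : ∀ i, ∃ j, 0 < A i j)
    (hb : ∀ i, 0 < b i)
    (x : ℕ → Fin N → ℝ)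
    (hx0 : ∀ j, 0 < x 0 j)
    (hiter : ∀ k, x (k + 1) = EMop A b (x k))
    (xs : Fin N → ℝ)
    (hlim : Tendsto x atTop (nhds xs))
    (hfix : EMop A b xs = xs) :
    ∀ k, KL xs (x (k + 1)) ≤ KL xs (x k) ∧
      (KL xs (x (k + 1)) = KL xs (x k) ↔ EMop A b (x k) = x k) := by
  -- positivity of the iterates
  have hxk : ∀ k j, 0 < x k j := by
    intro k
    induction k with
    | zero => exact hx0
    | succ m ih =>
      intro j
      rw [hiter m]
      exact mul_pos (ih j) (ff_pos hA hcol hrow hb ih j)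
  have hlimj : ∀ j, Tendsto (fun k => x k j) atTop (nhds (xs j)) :=
    fun j => tendsto_pi_nhds.mp hlim j
  have hzs : ∀ j, 0 ≤ xs j := fun j =>
    ge_of_tendsto' (hlimj j) (fun k => (hxk k j).le)
  -- sum of the limit
  have hsum1 : ∀ k, ∑ j, x (k + 1) j = ∑ i, b i := by
    intro k; rw [hiter k]; exact sum_EMop hA hrow (hxk k)
  have hsumxs : ∑ j, xs j = ∑ i, b i := by
    have h1 : Tendsto (fun k => ∑ j, x k j) atTop (nhds (∑ j, xs j)) :=
      tendsto_finset_sum _ (fun j _ => hlimj j)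
    have h2 : ∀ᶠ k in atTop, (∑ j, x k j) = ∑ i, b i := by
      refine eventually_atTop.mpr ⟨1, fun k hk => ?_⟩
      obtain ⟨m, rfl⟩ := Nat.exists_eq_succ_of_ne_zero (Nat.one_le_iff_ne_zero.mp hk)
      exact hsum1 m
    exact tendsto_nhds_unique ((tendsto_congr' h2).mp h1) tendsto_const_nhds
  -- dd limits
  have hd_lim : ∀ i, Tendsto (fun k => dd A (x k) i) atTop (nhds (dd A xs i)) := by
    intro i
    exact tendsto_finset_sum _ (fun j _ => (hlimj j).const_mul (A i j))
  -- IAb monotone along iterates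
  have hPhi_nonneg : ∀ k, 0 ≤ ∑ j, x k j *
      (ff A b (x k) j * Real.log (ff A b (x k) j) - ff A b (x k) j + 1) := by
    intro k
    refine Finset.sum_nonneg fun j _ => mul_nonneg (hxk k j).le ?_
    exact phi_nonneg (ff_pos hA hcol hrow hb (hxk k) j)
  have hstep : ∀ k, IAb A b (x (k + 1)) +
      (∑ j, x k j * (ff A b (x k) j * Real.log (ff A b (x k) j) - ff A b (x k) j + 1))
      ≤ IAb A b (x k) := by
    intro k
    rw [hiter k]
    exact IAb_step hA hcol hrow hb (hxk k)
  have hmono : ∀ k, IAb A b (x (k + 1)) ≤ IAb A b (x k) := by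
    intro k; linarith [hstep k, hPhi_nonneg k]
  have hanti : ∀ k m, k ≤ m → IAb A b (x m) ≤ IAb A b (x k) := by
    intro k m hkm
    induction m with
    | zero =>
      obtain rfl : k = 0 := Nat.le_zero.mp hkm
      exact le_refl _
    | succ n ih =>
      rcases Nat.lt_or_ge k (n + 1) with h | h
      · exact le_trans (hmono n) (ih (by omega))
      · have : k = n + 1 := by omega
        rw [this]
  -- positivity of dd A xs
  have hdxs : ∀ i, 0 < dd A xs i := by
    intro i0
    rcases (dd_nonneg hA hzs i0).lt_or_eq with h | h
    · exact h
    -- contradiction : dd A xs i0 = 0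
    exfalso
    have hS : 0 < ∑ i, b i :=
      Finset.sum_pos (fun i _ => hb i) (Finset.univ_nonempty_iff.mpr ⟨⟨0, hM⟩⟩)
    set S := ∑ i, b i with hSdef
    set B := IAb A b (x 1) with hB
    set C := (∑ i ∈ Finset.univ.erase i0, (b i * Real.log (b i / S) - b i)) - b i0 with hC
    -- lower bound for IAb (x (k+1))
    have hlb : ∀ k, b i0 * Real.log (b i0 / dd A (x (k + 1)) i0) + C ≤ IAb A b (x (k + 1)) := by
      intro k
      set y := x (k + 1) with hy
      have hypos : ∀ j, 0 < y j := hxk (k + 1)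
      have hdy : ∀ i, 0 < dd A y i := fun i => dd_pos hA hypos (hrow i)
      have hdyS : ∀ i, dd A y i ≤ S := by
        intro i
        have h1 : ∀ j, A i j * y j ≤ y j := fun j => by
          have hA1 : A i j ≤ 1 := by
            rw [← hcol j]
            exact Finset.single_le_sum (fun i' _ => hA i' j) (Finset.mem_univ i)
          nlinarith [hypos j, hA i j]
        calc dd A y i ≤ ∑ j, y j := Finset.sum_le_sum (fun j _ => h1 j)
          _ = S := hsum1 k
      have hterm : ∀ i, b i * Real.log (b i / S) - b i
          ≤ b i * Real.log (b i / dd A y i) - (b i - dd A y i) := by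
        intro i
        have hlog : Real.log (b i / S) ≤ Real.log (b i / dd A y i) := by
          apply Real.log_le_log (div_pos (hb i) hS)
          exact div_le_div_of_nonneg_left (hb i).le (hdy i) (hdyS i)
        nlinarith [mul_le_mul_of_nonneg_left hlog (hb i).le, (hdy i).le]
      have hsplit : IAb A b y = (b i0 * Real.log (b i0 / dd A y i0) - (b i0 - dd A y i0))
          + ∑ i ∈ Finset.univ.erase i0, (b i * Real.log (b i / dd A y i) - (b i - dd A y i)) := by
        unfold IAb
        rw [← Finset.sum_sub_distrib, ← Finset.add_sum_erase _ _ (Finset.mem_univ i0)]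
      rw [hsplit, hC]
      have h2 : ∑ i ∈ Finset.univ.erase i0, (b i * Real.log (b i / S) - b i)
          ≤ ∑ i ∈ Finset.univ.erase i0, (b i * Real.log (b i / dd A y i) - (b i - dd A y i)) :=
        Finset.sum_le_sum fun i _ => hterm i
      have h3 : - b i0 ≤ - (b i0 - dd A y i0) := by linarith [(hdy i0).le]
      linarith
    -- so dd A (x (k+1)) i0 is bounded below
    have hub : ∀ k, IAb A b (x (k + 1)) ≤ B := fun k => hanti 1 (k + 1) (by omega)
    set E := Real.exp ((B - C) / b i0) with hE
    have hEpos : 0 < E := Real.exp_pos _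
    have hdd_lb : ∀ k, b i0 / E ≤ dd A (x (k + 1)) i0 := by
      intro k
      have hdy : 0 < dd A (x (k + 1)) i0 := dd_pos hA (hxk (k + 1)) (hrow i0)
      have h1 : b i0 * Real.log (b i0 / dd A (x (k + 1)) i0) ≤ B - C := by
        linarith [hlb k, hub k]
      have h2 : Real.log (b i0 / dd A (x (k + 1)) i0) ≤ (B - C) / b i0 := by
        rw [le_div_iff₀ (hb i0)]
        calc Real.log (b i0 / dd A (x (k + 1)) i0) * b i0
            = b i0 * Real.log (b i0 / dd A (x (k + 1)) i0) := mul_comm _ _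
          _ ≤ B - C := h1
      have h3 : b i0 / dd A (x (k + 1)) i0 ≤ E := by
        rw [hE]
        exact (Real.log_le_iff_le_exp (div_pos (hb i0) hdy)).mp h2
      have h4 : b i0 ≤ E * dd A (x (k + 1)) i0 := (div_le_iff₀ hdy).mp h3
      rw [div_le_iff₀ hEpos]
      linarith [mul_comm E (dd A (x (k + 1)) i0)]
    have hlim0 : Tendsto (fun k => dd A (x (k + 1)) i0) atTop (nhds 0) := by
      rw [h]
      exact (hd_lim i0).comp (tendsto_add_atTop_nat 1)
    have : b i0 / E ≤ 0 := ge_of_tendsto' hlim0 (fun k => hdd_lb k)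
    have : 0 < b i0 / E := div_pos (hb i0) hEpos
    linarith
  -- IAb converges to IAb xs
  have hIAb_lim : Tendsto (fun k => IAb A b (x k)) atTop (nhds (IAb A b xs)) := by
    unfold IAb
    apply Tendsto.sub
    · apply tendsto_finset_sum
      intro i _
      have h1 : Tendsto (fun k => b i / dd A (x k) i) atTop (nhds (b i / dd A xs i)) :=
        tendsto_const_nhds.div (hd_lim i) (hdxs i).ne'
      have h2 : Tendsto (fun k => Real.log (b i / dd A (x k) i)) atTop
          (nhds (Real.log (b i / dd A xs i))) :=
        (Real.continuousAt_log (div_pos (hb i) (hdxs i)).ne').tendsto.comp h1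
      exact h2.const_mul (b i)
    · apply tendsto_finset_sum
      intro i _
      exact tendsto_const_nhds.sub (hd_lim i)
  have hIAb_ge : ∀ k, IAb A b xs ≤ IAb A b (x k) := by
    intro k
    refine le_of_tendsto hIAb_lim ?_
    exact eventually_atTop.mpr ⟨k, fun m hm => hanti k m hm⟩
  -- fixed point facts for xs
  have hfixz : ∀ j, 0 < xs j → ff A b xs j = 1 := by
    intro j hj
    have h1 : xs j * ff A b xs j = xs j := congrFun hfix j
    have h2 : xs j * ff A b xs j = xs j * 1 := by rw [mul_one]; exact h1
    exact mul_left_cancel₀ hj.ne' h2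
  -- main argument
  intro k
  have hxkp : ∀ j, 0 < x k j := hxk k
  have hffk : ∀ j, 0 < ff A b (x k) j := ff_pos hA hcol hrow hb hxkp
  have hdrop : IAb A b (x k) - IAb A b xs ≤ KL xs (x k) - KL xs (x (k + 1)) := by
    rw [hiter k]
    exact KL_drop hA hcol hrow hb hxkp hzs hdxs hfixz hsumxs
  have hchain : (∑ j, x k j * (ff A b (x k) j * Real.log (ff A b (x k) j)
      - ff A b (x k) j + 1)) ≤ KL xs (x k) - KL xs (x (k + 1)) := by
    have h1 := hstep k
    have h2 := hIAb_ge (k + 1)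
    linarith
  constructor
  · linarith [hchain, hPhi_nonneg k]
  constructor
  · -- equality implies fixed point
    intro heq
    have hPhi0 : ∑ j, x k j * (ff A b (x k) j * Real.log (ff A b (x k) j)
        - ff A b (x k) j + 1) = 0 := by
      linarith [hchain, hPhi_nonneg k]
    have hterm0 : ∀ j : Fin N, x k j * (ff A b (x k) j * Real.log (ff A b (x k) j)
        - ff A b (x k) j + 1) = 0 := by
      have := (Finset.sum_eq_zero_iff_of_nonneg (fun j _ =>
        mul_nonneg (hxkp j).le (phi_nonneg (hffk j)))).mp hPhi0
      exact fun j => this j (Finset.mem_univ j)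
    funext j
    have h1 : ff A b (x k) j * Real.log (ff A b (x k) j) - ff A b (x k) j + 1 = 0 := by
      have := hterm0 j
      rcases mul_eq_zero.mp this with h | h
      · exact absurd h (hxkp j).ne'
      · exact h
    have h2 : ff A b (x k) j = 1 := phi_eq_zero (hffk j) h1
    show x k j * ff A b (x k) j = x k j
    rw [h2, mul_one]
  · -- fixed point implies equality
    intro hfp
    rw [hiter k, hfp]
end

section
/- Let {x^k} be a sequence of componentwise positive vectors in ℝ^N and let x̂ ∈ ℝ^N be nonnegative. If the sequence {I(x̂, x^k)} is nonincreasing and some subsequence {x^{m_k}} converges to x̂, then the whole sequence {x^k} converges to x̂. -/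
open Finset Filter Topology

/-!
The Kullback–Leibler distance dominates the squared Hellinger distance: coordinatewise,
`u log (u / t) - (u - t) ≥ (√u - √t)²`, which is `log s ≥ 1 - 1/s` at `s = √u / √t`.
Since `I(x̂, ·)` is continuous at `x̂` and vanishes there, the subsequence drives `I(x̂, x^{m_k})`
to `0`; a nonincreasing, nonnegative sequence with a subsequence tending to `0` tends to `0`.
Hence `√(x^k_j) → √(x̂_j)` for every `j`, and so `x^k → x̂`.
-/

lemma sq_sqrt_sub_sqrt_le_mul_log_div {u t : ℝ} (hu : 0 ≤ u) (ht : 0 < t) :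
    (√u - √t) ^ 2 ≤ u * Real.log (u / t) - (u - t) := by
  obtain ⟨a, ha, rfl⟩ : ∃ a, 0 ≤ a ∧ u = a ^ 2 := ⟨√u, Real.sqrt_nonneg u, (Real.sq_sqrt hu).symm⟩
  obtain ⟨b, hb, rfl⟩ : ∃ b, 0 < b ∧ t = b ^ 2 :=
    ⟨√t, Real.sqrt_pos.2 ht, (Real.sq_sqrt ht.le).symm⟩
  rw [Real.sqrt_sq ha, Real.sqrt_sq hb.le]
  suffices 2 * (a ^ 2 - a * b) ≤ a ^ 2 * Real.log (a ^ 2 / b ^ 2) by nlinarith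
  rcases ha.eq_or_lt with rfl | ha
  · simp
  have hlog := Real.one_sub_inv_le_log_of_pos (div_pos ha hb)
  rw [inv_div] at hlog
  calc 2 * (a ^ 2 - a * b) = a ^ 2 * (2 * (1 - b / a)) := by field_simp
    _ ≤ a ^ 2 * Real.log (a ^ 2 / b ^ 2) := by
      rw [← div_pow, Real.log_pow]; push_cast; gcongr

lemma KL_eq_sum {N : ℕ} (u v : Fin N → ℝ) :
    KL u v = ∑ j, (u j * Real.log (u j / v j) - (u j - v j)) := by
  simp only [KL, Finset.sum_sub_distrib]

lemma mul_log_div_sub_sub_nonneg {u t : ℝ} (hu : 0 ≤ u) (ht : 0 < t) :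
    0 ≤ u * Real.log (u / t) - (u - t) :=
  (sq_nonneg _).trans (sq_sqrt_sub_sqrt_le_mul_log_div hu ht)

lemma KL_nonneg {N : ℕ} {u v : Fin N → ℝ} (hu : 0 ≤ u) (hv : ∀ j, 0 < v j) : 0 ≤ KL u v := by
  rw [KL_eq_sum]
  exact Finset.sum_nonneg fun j _ => mul_log_div_sub_sub_nonneg (hu j) (hv j)

lemma sq_sqrt_sub_sqrt_le_KL {N : ℕ} {u v : Fin N → ℝ} (hu : 0 ≤ u) (hv : ∀ j, 0 < v j)
    (j : Fin N) : (√(u j) - √(v j)) ^ 2 ≤ KL u v := by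
  rw [KL_eq_sum]
  refine (sq_sqrt_sub_sqrt_le_mul_log_div (hu j) (hv j)).trans ?_
  exact Finset.single_le_sum (fun i _ => mul_log_div_sub_sub_nonneg (hu i) (hv i))
    (Finset.mem_univ j)

lemma tendsto_of_tendsto_KL_zero {ι : Type*} {l : Filter ι} {N : ℕ} {u : Fin N → ℝ}
    {v : ι → Fin N → ℝ} (hu : 0 ≤ u) (hv : ∀ k j, 0 < v k j)
    (h : Tendsto (fun k => KL u (v k)) l (𝓝 0)) : Tendsto v l (𝓝 u) := by
  refine tendsto_pi_nhds.2 fun j => ?_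
  have hsqrt : Tendsto (fun k => √(v k j)) l (𝓝 √(u j)) := by
    rw [tendsto_iff_dist_tendsto_zero]
    refine squeeze_zero (fun _ => dist_nonneg) (fun k => ?_) (by simpa using h.sqrt)
    rw [dist_comm, Real.dist_eq, ← Real.sqrt_sq_eq_abs]
    exact Real.sqrt_le_sqrt (sq_sqrt_sub_sqrt_le_KL hu (hv k) j)
  simpa only [Real.sq_sqrt (hv _ j).le, Real.sq_sqrt (hu j)] using hsqrt.pow 2

lemma KL_self {N : ℕ} (u : Fin N → ℝ) : KL u u = 0 := by
  simp [KL]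

lemma continuousAt_mul_log_div_self {u : ℝ} (hu : 0 ≤ u) :
    ContinuousAt (fun t => u * Real.log (u / t)) u := by
  rcases hu.eq_or_lt with rfl | hu
  · simp [continuousAt_const]
  · exact continuousAt_const.mul
      ((continuousAt_const.div continuousAt_id hu.ne').log (by simp [hu.ne']))

lemma continuousAt_KL_self {N : ℕ} {u : Fin N → ℝ} (hu : 0 ≤ u) : ContinuousAt (KL u) u := by
  unfold KL
  refine (tendsto_finsetSum _ fun j _ => ?_).sub (tendsto_finsetSum _ fun j _ => ?_)
  · exact (continuousAt_mul_log_div_self (hu j)).tendsto.comp ((continuous_apply j).tendsto u)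
  · exact continuousAt_const.sub (continuous_apply j).continuousAt

lemma Antitone.tendsto_of_tendsto_comp_of_forall_le {ι : Type*} {l : Filter ι} [l.NeBot]
    {f : ℕ → ℝ} {a : ℝ} (hf : Antitone f) (ha : ∀ n, a ≤ f n) {φ : ι → ℕ}
    (hφ : Tendsto (f ∘ φ) l (𝓝 a)) : Tendsto f atTop (𝓝 a) := by
  have hbdd : BddBelow (Set.range f) := ⟨a, Set.forall_mem_range.2 ha⟩
  have hinf : ⨅ n, f n = a :=
    le_antisymm (_root_.ge_of_tendsto hφ (Eventually.of_forall fun k => ciInf_le hbdd _))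
      (le_ciInf ha)
  exact hinf ▸ tendsto_atTop_ciInf hf hbdd

theorem stmt_10_general
    (N : ℕ)
    (x : ℕ → Fin N → ℝ) (xh : Fin N → ℝ)
    (hx : ∀ k j, 0 < x k j)
    (hxh : ∀ j, 0 ≤ xh j)
    (hmono : Antitone (fun k => KL xh (x k)))
    (φ : ℕ → ℕ)
    (hsub : Tendsto (fun k => x (φ k)) atTop (nhds xh)) :
    Tendsto x atTop (nhds xh) := by
  have hsubKL : Tendsto (fun k => KL xh (x (φ k))) atTop (𝓝 0) :=
    KL_self xh ▸ (continuousAt_KL_self hxh).tendsto.comp hsub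
  exact tendsto_of_tendsto_KL_zero hxh hx
    (hmono.tendsto_of_tendsto_comp_of_forall_le (fun k => KL_nonneg hxh (hx k)) hsubKL)

theorem stmt_10
    (N : ℕ) (hN : 0 < N)
    (x : ℕ → Fin N → ℝ) (xh : Fin N → ℝ)
    (hx : ∀ k j, 0 < x k j)
    (hxh : ∀ j, 0 ≤ xh j)
    (hmono : Antitone (fun k => KL xh (x k)))
    (φ : ℕ → ℕ) (hφ : StrictMono φ)
    (hsub : Tendsto (fun k => x (φ k)) atTop (nhds xh)) :
    Tendsto x atTop (nhds xh) :=
  stmt_10_general N x xh hx hxh hmono φ hsub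
end
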